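/- arXiv:1311.0575 — 4 statements merged into one kernel-verified Lean document; each statement's English description precedes it below -/
import Mathlib

section
/- Let G and H be groups (not necessarily finite), and let v : G → H and w : H → G be group homomorphisms such that Z(H)·v(G) = H and Z(G)·w(H) = G. Then the following are equivalent: (a) (w∘v)(g)·g⁻¹ ∈ Z(G) for every g ∈ G; (b) (v∘w)(h)·h⁻¹ ∈ Z(H) for every h ∈ H. (These conditions say that the endomorphisms w∘v of G and v∘w of H are normal, i.e., differ from the identity by a central-valued map.) -/
/-!
Since `H = Z(H)·v(G)`, the map `v` sends central elements to central ones, and likewise `w`.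
Writing `h = z · v g` with `z` central, `(v∘w)(h)·h⁻¹ = v(w z) · v((w∘v)(g)·g⁻¹) · z⁻¹`
is then a product of central elements as soon as `w∘v` is normal; the converse is the same
argument with the roles of `v` and `w` exchanged.
-/

namespace MonoidHom

variable {G H : Type*} [Group G] [Group H]

def IsNormalEndomorphism (f : G →* G) : Prop :=
  ∀ g, f g * g⁻¹ ∈ Subgroup.center G

theorem map_mem_center_of_forall_exists_center_mul (v : G →* H)
    (hv : ∀ h : H, ∃ z ∈ Subgroup.center H, ∃ g : G, h = z * v g)
    {c : G} (hc : c ∈ Subgroup.center G) : v c ∈ Subgroup.center H := by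
  rw [Subgroup.mem_center_iff]
  intro b
  obtain ⟨z, hz, g, rfl⟩ := hv b
  have hcg : v g * v c = v c * v g := by
    rw [← map_mul, ← map_mul, Subgroup.mem_center_iff.mp hc g]
  calc z * v g * v c = z * v c * v g := by rw [mul_assoc, hcg, ← mul_assoc]
    _ = v c * (z * v g) := by rw [← Subgroup.mem_center_iff.mp hz (v c), mul_assoc]

theorem IsNormalEndomorphism.comp_swap (v : G →* H) (w : H →* G)
    (hv : ∀ h : H, ∃ z ∈ Subgroup.center H, ∃ g : G, h = z * v g)
    (hw : ∀ g : G, ∃ z ∈ Subgroup.center G, ∃ h : H, g = z * w h)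
    (hwv : (w.comp v).IsNormalEndomorphism) : (v.comp w).IsNormalEndomorphism := by
  intro h
  obtain ⟨z, hz, g, rfl⟩ := hv h
  have hwz : w z ∈ Subgroup.center G := map_mem_center_of_forall_exists_center_mul w hw hz
  have hvwz : v (w z) ∈ Subgroup.center H := map_mem_center_of_forall_exists_center_mul v hv hwz
  have hvg : v (w (v g) * g⁻¹) ∈ Subgroup.center H :=
    map_mem_center_of_forall_exists_center_mul v hv (hwv g)
  have key : v (w (z * v g)) * (z * v g)⁻¹ = v (w z) * v (w (v g) * g⁻¹) * z⁻¹ := by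
    simp only [map_mul, map_inv]
    group
  simpa only [comp_apply, key] using
    Subgroup.mul_mem _ (Subgroup.mul_mem _ hvwz hvg) (Subgroup.inv_mem _ hz)

end MonoidHom

/-- Let `G` and `H` be groups (not necessarily finite), and let
`v : G → H` and `w : H → G` be group homomorphisms such that `Z(H)·v(G) = H` and
`Z(G)·w(H) = G`.  Then `w ∘ v` is a normal endomorphism of `G` (i.e.,
`(w∘v)(g)·g⁻¹ ∈ Z(G)` for all `g`) if and only if `v ∘ w` is a normal
endomorphism of `H`. -/
theorem normal_comp_iff_normal_comp {G H : Type*} [Group G] [Group H]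
    (v : G →* H) (w : H →* G)
    (hv : ∀ h : H, ∃ z ∈ Subgroup.center H, ∃ g : G, h = z * v g)
    (hw : ∀ g : G, ∃ z ∈ Subgroup.center G, ∃ h : H, g = z * w h) :
    (∀ g : G, w (v g) * g⁻¹ ∈ Subgroup.center G) ↔
    (∀ h : H, v (w h) * h⁻¹ ∈ Subgroup.center H) :=
  ⟨MonoidHom.IsNormalEndomorphism.comp_swap v w hv hw,
    MonoidHom.IsNormalEndomorphism.comp_swap w v hw hv⟩
end

section
/- Let G and H be groups (not necessarily finite), and let v : G → H and w : H → G be group homomorphisms such that Z(H)·v(G) = H and Z(G)·w(H) = G. If moreover (w∘v)(g)·g⁻¹ ∈ Z(G) for every g ∈ G, then ker(v) ⊆ Z(G) and ker(w) ⊆ Z(H). -/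
/-!
Since `Z(H)·v(G) = H`, the homomorphism `v` maps `Z(G)` into `Z(H)`, and likewise `w` maps
`Z(H)` into `Z(G)`. The hypothesis on `w ∘ v` says `g ≡ w (v g)` modulo `Z(G)`, so `g` is
central as soon as `w (v g)` is. For `g ∈ ker v` this is immediate. For `h = z * v g ∈ ker w`
with `z` central, `w (v g) = (w z)⁻¹` is central, hence so are `g`, `v g` and `h`.
-/

namespace Subgroup

variable {G H : Type*} [Group G] [Group H]

theorem map_mem_center_of_forall_eq_center_mul (v : G →* H)
    (hv : ∀ h : H, ∃ z ∈ center H, ∃ g : G, h = z * v g) {x : G} (hx : x ∈ center G) :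
    v x ∈ center H := by
  rw [mem_center_iff]
  intro h
  obtain ⟨z, hz, g, rfl⟩ := hv h
  calc z * v g * v x = z * v (x * g) := by rw [mul_assoc, ← map_mul, hx.comm g]
    _ = v x * (z * v g) := by rw [map_mul, ← mul_assoc, hz.comm, mul_assoc]

theorem mem_center_of_mul_inv_mem_center {a g : G} (ha : a ∈ center G)
    (hag : a * g⁻¹ ∈ center G) : g ∈ center G := by
  rwa [Subgroup.mul_mem_cancel_left _ ha, Subgroup.inv_mem_iff] at hag

end Subgroup

/-- Let `G` and `H` be groups (not necessarily finite), and let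
`v : G → H` and `w : H → G` be group homomorphisms such that `Z(H)·v(G) = H` and
`Z(G)·w(H) = G`.  If moreover `(w∘v)(g)·g⁻¹ ∈ Z(G)` for every `g ∈ G`, then
`ker v ⊆ Z(G)` and `ker w ⊆ Z(H)`. -/
theorem ker_le_center_of_normal_comp {G H : Type*} [Group G] [Group H]
    (v : G →* H) (w : H →* G)
    (hv : ∀ h : H, ∃ z ∈ Subgroup.center H, ∃ g : G, h = z * v g)
    (hw : ∀ g : G, ∃ z ∈ Subgroup.center G, ∃ h : H, g = z * w h)
    (hn : ∀ g : G, w (v g) * g⁻¹ ∈ Subgroup.center G) :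
    v.ker ≤ Subgroup.center G ∧ w.ker ≤ Subgroup.center H := by
  have mem_center_of_comp {g : G} (hg : w (v g) ∈ Subgroup.center G) : g ∈ Subgroup.center G :=
    Subgroup.mem_center_of_mul_inv_mem_center hg (hn g)
  refine ⟨fun g hg => mem_center_of_comp ?_, fun h hh => ?_⟩
  · rw [MonoidHom.mem_ker.mp hg, map_one]
    exact one_mem _
  · obtain ⟨z, hz, g, rfl⟩ := hv h
    have hwz : w z ∈ Subgroup.center G :=
      Subgroup.map_mem_center_of_forall_eq_center_mul w hw hz
    have hwvg : w (v g) = (w z)⁻¹ :=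
      eq_inv_of_mul_eq_one_right (by rwa [MonoidHom.mem_ker, map_mul] at hh)
    have hg : g ∈ Subgroup.center G := mem_center_of_comp (hwvg ▸ inv_mem hwz)
    exact mul_mem hz (Subgroup.map_mem_center_of_forall_eq_center_mul v hv hg)
end

section
/- Let G be a finite group, let v, v' : G → G be group endomorphisms, and let z : G → G be a group homomorphism with z(G) ⊆ Z(G), such that z(g)·v'(v(g)) = g for all g ∈ G. Then ker(v) is contained in an abelian direct factor of G: there exist subgroups K and N of G with K ⊆ Z(G) (so K is abelian and normal), ker(v) ⊆ K, N normal in G, K ∩ N = 1, and G = K·N. -/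
/-!
With `u = v' ∘ v`, the hypothesis says `g * (u g)⁻¹ = z g` is central, so `u` and all its powers
are central endomorphisms: they commute with conjugation, so their ranges are normal, and their
kernels lie in the center. As `G` is finite, some power `e = u ^ n` (`n ≠ 0`) is idempotent, and
then `G` is the internal direct product of `ker e ⊇ ker v` and `range e`.
-/

open Subgroup

theorem exists_isIdempotentElem_pow {M : Type*} [Monoid M] [Finite M] (a : M) :
    ∃ n ≠ 0, IsIdempotentElem (a ^ n) := by
  let _ : TopologicalSpace M := ⊥
  have : DiscreteTopology M := ⟨rfl⟩
  obtain ⟨_, ⟨n, rfl⟩, h⟩ := exists_idempotent_in_compact_subsemigroup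
    (fun _ => continuous_of_discreteTopology) (Set.range fun n : ℕ => a ^ (n + 1))
    (Set.range_nonempty _) (Set.toFinite _).isCompact
    (by rintro _ ⟨i, rfl⟩ _ ⟨j, rfl⟩; exact ⟨i + j + 1, by rw [← pow_add]; ring_nf⟩)
  exact ⟨n + 1, n.succ_ne_zero, h⟩

section IdempotentEndomorphism

variable {G : Type*} [Group G] {e : Monoid.End G}

theorem IsIdempotentElem.map_map_eq (he : IsIdempotentElem e) (g : G) : e (e g) = e g :=
  DFunLike.congr_fun he g

theorem IsIdempotentElem.ker_inf_range_eq_bot (he : IsIdempotentElem e) :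
    (e : G →* G).ker ⊓ (e : G →* G).range = ⊥ := by
  rw [eq_bot_iff]
  rintro _ ⟨hker, g, rfl⟩
  change e (e g) = 1 at hker
  rwa [he.map_map_eq] at hker

theorem IsIdempotentElem.mul_inv_map_mem_ker (he : IsIdempotentElem e) (g : G) :
    g * (e g)⁻¹ ∈ (e : G →* G).ker := by
  change e (g * (e g)⁻¹) = 1
  rw [map_mul, map_inv, he.map_map_eq, mul_inv_cancel]

end IdempotentEndomorphism

def centralEnd (G : Type*) [Group G] : Submonoid (Monoid.End G) where
  carrier := {u | ∀ g, g * (u g)⁻¹ ∈ center G}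
  one_mem' g := by simp [one_mem]
  mul_mem' {u w} hu hw g := by
    have : g * ((u * w) g)⁻¹ = g * (w g)⁻¹ * (w g * (u (w g))⁻¹) := by simp [mul_assoc]
    rw [this]
    exact mul_mem (hw g) (hu (w g))

namespace centralEnd

variable {G : Type*} [Group G] {u : Monoid.End G}

theorem map_conj (hu : u ∈ centralEnd G) (h g : G) : u (h * g * h⁻¹) = h * u g * h⁻¹ := by
  obtain ⟨c, hc, huh⟩ : ∃ c ∈ center G, u h = c * h := ⟨(h * (u h)⁻¹)⁻¹, inv_mem (hu h), by group⟩
  calc u (h * g * h⁻¹) = c * (h * u g * h⁻¹) * c⁻¹ := by rw [map_mul, map_mul, map_inv, huh]; group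
    _ = h * u g * h⁻¹ := by rw [← mem_center_iff.mp hc, mul_inv_cancel_right]

theorem normal_range (hu : u ∈ centralEnd G) : (u : G →* G).range.Normal :=
  ⟨by rintro _ ⟨g, rfl⟩ h; exact ⟨h * g * h⁻¹, map_conj hu h g⟩⟩

theorem ker_le_center (hu : u ∈ centralEnd G) : (u : G →* G).ker ≤ center G := by
  intro g (hg : u g = 1)
  simpa [hg] using hu g

end centralEnd

/-- Let `G` be a finite group, let `v, v' : G → G` be group
endomorphisms, and let `z : G → G` be a group homomorphism with `z(G) ⊆ Z(G)`,
such that `z(g)·v'(v(g)) = g` for all `g ∈ G`.  Then `ker v` is contained in an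
abelian direct factor of `G`: there exist subgroups `K` and `N` of `G` with
`K ⊆ Z(G)`, `ker v ⊆ K`, `N` normal in `G`, `K ∩ N = 1`, and `G = K·N`. -/
theorem ker_in_abelian_direct_factor {G : Type*} [Group G] [Finite G]
    (v v' z : G →* G)
    (hz : ∀ g : G, z g ∈ Subgroup.center G)
    (hsplit : ∀ g : G, z g * v' (v g) = g) :
    ∃ K N : Subgroup G, K ≤ Subgroup.center G ∧ v.ker ≤ K ∧ N.Normal ∧
      K ⊓ N = ⊥ ∧ ∀ g : G, ∃ k ∈ K, ∃ n ∈ N, g = k * n := by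
  let u : Monoid.End G := v'.comp v
  have hu : u ∈ centralEnd G := fun g => eq_mul_inv_of_mul_eq (hsplit g) ▸ hz g
  have : Finite (Monoid.End G) := Finite.of_injective _ DFunLike.coe_injective
  obtain ⟨n, hn, he⟩ := exists_isIdempotentElem_pow u
  have hker : v.ker ≤ (u ^ n : Monoid.End G).ker := by
    intro g (hg : v g = 1)
    obtain ⟨m, rfl⟩ := Nat.exists_eq_succ_of_ne_zero hn
    change (u ^ m) (v' (v g)) = 1
    rw [hg, map_one, map_one]
  exact ⟨_, _, centralEnd.ker_le_center (pow_mem hu n), hker,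
    centralEnd.normal_range (pow_mem hu n), he.ker_inf_range_eq_bot,
    fun g => ⟨_, he.mul_inv_map_mem_ker g, _, ⟨g, rfl⟩, (inv_mul_cancel_right g _).symm⟩⟩
end

section
/- Let G and H be finite groups. If the direct product G^{ab} × G is isomorphic as a group to H^{ab} × H, where G^{ab} = G/G' denotes the abelianization, then G is isomorphic to H. -/
/-!
Lovász: a finite group `G` is determined up to isomorphism by the numbers `|Hom(L, G)|`, `L`
finite. Sorting homomorphisms by their kernel gives `|Hom(L, G)| = ∑_{N ⊴ L} |Inj(L/N, G)|`, so
by induction on `|L|` the hom counts determine the numbers of injective homomorphisms, and an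
injection `G → H` between groups of equal order is an isomorphism. Since hom counts are
multiplicative in products, this lets one cancel `A` from `A × G ≅ A × H` and take square roots
of `A × A ≅ B × B`. Abelianizing `Gᵃᵇ × G ≅ Hᵃᵇ × H` gives `Gᵃᵇ × Gᵃᵇ ≅ Hᵃᵇ × Hᵃᵇ`, hence
`Gᵃᵇ ≅ Hᵃᵇ`, and cancelling this factor gives `G ≅ H`.
-/

open Function

universe u v w

instance MonoidHom.instFinite {M N : Type*} [MulOneClass M] [MulOneClass N] [Finite M] [Finite N] :
    Finite (M →* N) :=
  DFunLike.finite _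

theorem Nat.card_monoidHom_prod (L M N : Type*) [MulOneClass L] [MulOneClass M] [MulOneClass N] :
    Nat.card (L →* M × N) = Nat.card (L →* M) * Nat.card (L →* N) := by
  rw [← Nat.card_prod]
  exact Nat.card_congr
    { toFun f := ((MonoidHom.fst M N).comp f, (MonoidHom.snd M N).comp f)
      invFun p := p.1.prod p.2
      left_inv _ := rfl
      right_inv _ := rfl }

noncomputable def abelianizationProdEquiv (M N : Type*) [Group M] [Group N] :
    Abelianization (M × N) ≃* Abelianization M × Abelianization N :=
  (QuotientGroup.quotientMulEquivOfEq (by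
    rw [commutator_def, commutator_def, commutator_def, ← Subgroup.top_prod_top,
      Subgroup.commutator_prod_prod])).trans
    (QuotientGroup.prodMulEquiv _ _)

section Lovasz

attribute [local instance] Fintype.ofFinite

variable {L : Type u} {G : Type v} [Group L] [Group G]

variable (L G) in
noncomputable def injHomCount : ℕ :=
  Nat.card {f : L →* G // Injective f}

theorem injHomCount_congr {L' : Type w} [Group L'] (e : L ≃* L') :
    injHomCount L G = injHomCount L' G :=
  Nat.card_congr <| e.monoidHomCongrLeftEquiv.subtypeEquiv fun f ↦ by
    simp [MulEquiv.monoidHomCongrLeftEquiv]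

noncomputable def kerEqEquivInjective (N : Subgroup L) [N.Normal] :
    {f : L →* G // f.ker = N} ≃ {g : L ⧸ N →* G // Injective g} where
  toFun f :=
    ⟨QuotientGroup.lift N f f.2.ge, (QuotientGroup.injective_lift_iff _ _ _).2 f.2.symm⟩
  invFun g := ⟨g.1.comp (QuotientGroup.mk' N), by
    rw [← MonoidHom.comap_ker, (MonoidHom.ker_eq_bot_iff _).2 g.2, MonoidHom.comap_bot,
      QuotientGroup.ker_mk']⟩
  left_inv _ := rfl
  right_inv _ := Subtype.ext <| QuotientGroup.monoidHom_ext N rfl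

theorem Nat.card_monoidHom_eq_sum_injHomCount [Finite L] [Finite G] :
    Nat.card (L →* G) =
      ∑ N : {N : Subgroup L // N.Normal}, haveI := N.2; injHomCount (L ⧸ N.1) G := by
  let kerOf (f : L →* G) : {N : Subgroup L // N.Normal} := ⟨f.ker, f.normal_ker⟩
  rw [← Nat.card_congr (Equiv.sigmaFiberEquiv kerOf), Nat.card_sigma]
  refine Finset.sum_congr rfl fun N _ ↦ ?_
  have := N.2
  exact Nat.card_congr <| (Equiv.subtypeEquivRight fun f ↦ Subtype.ext_iff).trans
    (kerEqEquivInjective N.1)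

theorem Subgroup.card_quotient_lt_of_ne_bot [Finite L] {N : Subgroup L} (hN : N ≠ ⊥) :
    Nat.card (L ⧸ N) < Nat.card L := by
  rw [N.card_eq_card_quotient_mul_card_subgroup]
  exact lt_mul_of_one_lt_right Nat.card_pos ((Subgroup.one_lt_card_iff_ne_bot N).2 hN)

theorem injHomCount_eq_of_card_monoidHom_eq {H : Type w} [Group H] [Finite G] [Finite H]
    (h : ∀ (L : Type u) [Group L] [Finite L], Nat.card (L →* G) = Nat.card (L →* H))
    (L : Type u) [Group L] [Finite L] : injHomCount L G = injHomCount L H := by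
  induction hL : Nat.card L using Nat.strong_induction_on generalizing L with
  | _ n ih =>
  have := Classical.decEq {N : Subgroup L // N.Normal}
  let bot : {N : Subgroup L // N.Normal} := ⟨⊥, inferInstance⟩
  have hquot : ∀ N ∈ Finset.univ.erase bot,
      (have := N.2; injHomCount (L ⧸ N.1) G) = (have := N.2; injHomCount (L ⧸ N.1) H) := by
    intro N hN
    have := N.2
    have hne : N.1 ≠ ⊥ := fun hbot ↦ Finset.ne_of_mem_erase hN (Subtype.ext hbot)
    exact ih _ (hL ▸ Subgroup.card_quotient_lt_of_ne_bot hne) (L ⧸ N.1) rfl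
  have key := h L
  rw [Nat.card_monoidHom_eq_sum_injHomCount, Nat.card_monoidHom_eq_sum_injHomCount,
    ← Finset.add_sum_erase _ _ (Finset.mem_univ bot),
    ← Finset.add_sum_erase _ _ (Finset.mem_univ bot),
    Finset.sum_congr rfl hquot] at key
  have hbot : injHomCount (L ⧸ (⊥ : Subgroup L)) G = injHomCount (L ⧸ (⊥ : Subgroup L)) H :=
    Nat.add_right_cancel key
  rwa [injHomCount_congr QuotientGroup.quotientBot,
    injHomCount_congr QuotientGroup.quotientBot] at hbot

theorem nonempty_mulEquiv_of_card_monoidHom_eq {H : Type w} [Group H] [Finite G] [Finite H]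
    (hcard : Nat.card G = Nat.card H)
    (h : ∀ (L : Type v) [Group L] [Finite L], Nat.card (L →* G) = Nat.card (L →* H)) :
    Nonempty (G ≃* H) := by
  have : Nonempty {f : G →* G // Injective f} := ⟨⟨MonoidHom.id G, injective_id⟩⟩
  have hpos : 0 < injHomCount G H := injHomCount_eq_of_card_monoidHom_eq h G ▸ Nat.card_pos
  obtain ⟨⟨f, hf⟩⟩ := (Nat.card_pos_iff.1 hpos).1
  exact ⟨MulEquiv.ofBijective f ((Nat.bijective_iff_injective_and_card f).2 ⟨hf, hcard⟩)⟩

end Lovasz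

theorem nonempty_mulEquiv_of_prod_self {M N : Type*} [Group M] [Group N] [Finite M] [Finite N]
    (e : M × M ≃* N × N) : Nonempty (M ≃* N) := by
  refine nonempty_mulEquiv_of_card_monoidHom_eq ?_ fun L _ _ ↦ ?_
  · exact Nat.mul_self_inj.1 (by simpa [Nat.card_prod] using Nat.card_congr e.toEquiv)
  · exact Nat.mul_self_inj.1 (by
      simpa [Nat.card_monoidHom_prod] using Nat.card_congr (e.monoidHomCongrRightEquiv (M := L)))

theorem nonempty_mulEquiv_of_prod_left_cancel {A G H : Type*} [Group A] [Group G] [Group H]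
    [Finite A] [Finite G] [Finite H] (e : A × G ≃* A × H) : Nonempty (G ≃* H) := by
  refine nonempty_mulEquiv_of_card_monoidHom_eq ?_ fun L _ _ ↦ ?_
  · exact Nat.eq_of_mul_eq_mul_left Nat.card_pos (by
      simpa [Nat.card_prod] using Nat.card_congr e.toEquiv)
  · exact Nat.eq_of_mul_eq_mul_left (Nat.card_pos (α := L →* A)) (by
      simpa [Nat.card_monoidHom_prod] using Nat.card_congr (e.monoidHomCongrRightEquiv (M := L)))

noncomputable def abelianizationProdSelfEquiv (G : Type*) [Group G] :
    Abelianization (Abelianization G × G) ≃* Abelianization G × Abelianization G :=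
  (abelianizationProdEquiv _ G).trans (Abelianization.equivOfComm.symm.prodCongr (.refl _))

/-- Let `G` and `H` be finite groups.  If
`G^{ab} × G ≅ H^{ab} × H` as groups, where `G^{ab} = G/G'` is the abelianization,
then `G ≅ H`. -/
theorem iso_of_abelianization_prod_iso {G H : Type*} [Group G] [Group H]
    [Finite G] [Finite H]
    (e : (Abelianization G × G) ≃* (Abelianization H × H)) :
    Nonempty (G ≃* H) := by
  obtain ⟨eAb⟩ := nonempty_mulEquiv_of_prod_self <|
    (abelianizationProdSelfEquiv G).symm.trans
      (e.abelianizationCongr.trans (abelianizationProdSelfEquiv H))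
  exact nonempty_mulEquiv_of_prod_left_cancel (e.trans (eAb.symm.prodCongr (.refl H)))
end
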